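/- Let 1/3 ≤ λ < 1/2 and let F_λ be the middle (1−2λ) Cantor set. Then D := {x₁²/x₂ : x₁, x₂ ∈ F_λ, x₂ ≠ 0} ∪ {0} satisfies D = {0} ∪ ⋃_{i∈ℤ} [λⁱ(1−λ)², λⁱ/(1−λ)]. -/

import Mathlib

open Set

noncomputable def wordMap (l : ℝ) (σ : List Bool) (x : ℝ) : ℝ :=
  σ.foldr (fun b y => l * y + (if b then 1 - l else 0)) x

/-- The middle `1 - 2l` Cantor set. -/
noncomputable def cantor (l : ℝ) : Set ℝ :=
  Icc 0 1 \ ⋃ σ : List Bool, Ioo (wordMap l σ l) (wordMap l σ (1 - l))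

lemma wordMap_nil (l x : ℝ) : wordMap l [] x = x := rfl

lemma wordMap_cons (l : ℝ) (b : Bool) (σ : List Bool) (x : ℝ) :
    wordMap l (b :: σ) x = l * wordMap l σ x + (if b then 1 - l else 0) := rfl

lemma wordMap_mem (l : ℝ) (h0 : 0 ≤ l) (h1 : l ≤ 1) (σ : List Bool) {x : ℝ}
    (hx : x ∈ Icc (0:ℝ) 1) : wordMap l σ x ∈ Icc (0:ℝ) 1 := by
  induction σ with
  | nil => exact hx
  | cons b σ ih =>
    rw [wordMap_cons]
    obtain ⟨i1, i2⟩ := ih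
    cases b <;> simp only [if_true, if_false, Bool.false_eq_true] <;>
      exact ⟨by nlinarith, by nlinarith⟩

/-- Chains of left endpoints of nested basic intervals. -/
def IsChain' (l : ℝ) (c : ℕ → ℝ) : Prop :=
  c 0 = 0 ∧ ∀ n, c (n + 1) = c n ∨ c (n + 1) = c n + l ^ n * (1 - l)

lemma not_mem_gap {l : ℝ} (h0 : 1/3 ≤ l) (h1 : l < 1/2) (σ : List Bool) :
    ∀ (c : ℕ → ℝ) (x : ℝ), IsChain' l c → (∀ n, c n ≤ x ∧ x ≤ c n + l ^ n) →
    x ∉ Ioo (wordMap l σ l) (wordMap l σ (1 - l)) := by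
  have hl0 : (0:ℝ) < l := by linarith
  induction σ with
  | nil =>
    intro c x hc hb hx
    obtain ⟨hc0, hstep⟩ := hc
    have h1' := hb 1
    rw [wordMap_nil, wordMap_nil] at hx
    obtain ⟨hx1, hx2⟩ := hx
    rcases hstep 0 with h | h <;> rw [hc0] at h <;> rw [h] at h1' <;>
      simp only [pow_zero, pow_one, one_mul, zero_add] at h1' <;>
      obtain ⟨hb1, hb2⟩ := h1' <;> linarith
  | cons b σ ih =>
    intro c x hc hb hx
    obtain ⟨hc0, hstep⟩ := hc
    have hb1 := hb 1
    rw [pow_one] at hb1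
    have hc1 : c 1 = 0 ∨ c 1 = 1 - l := by
      rcases hstep 0 with h | h <;> rw [hc0] at h <;> simp only [pow_zero, one_mul, zero_add] at h
      · left; exact h
      · right; exact h
    rw [wordMap_cons, wordMap_cons] at hx
    obtain ⟨hxlo, hxhi⟩ := hx
    obtain ⟨hu1, hu2⟩ : wordMap l σ l ∈ Icc (0:ℝ) 1 :=
      wordMap_mem l (le_of_lt hl0) (by linarith) σ ⟨le_of_lt hl0, by linarith⟩
    obtain ⟨hv1, hv2⟩ : wordMap l σ (1-l) ∈ Icc (0:ℝ) 1 :=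
      wordMap_mem l (le_of_lt hl0) (by linarith) σ ⟨by linarith, by linarith⟩
    obtain ⟨hb1a, hb1b⟩ := hb1
    have hmatch : (if b then 1 - l else 0) = c 1 := by
      rcases hc1 with h | h <;> cases b <;>
        simp only [if_true, if_false, Bool.false_eq_true, h] <;>
        first
        | rfl
        | (exfalso; rw [h] at hb1a hb1b;
           simp only [if_true, if_false, Bool.false_eq_true] at hxlo hxhi;
           nlinarith [mul_nonneg hl0.le hu1, mul_nonneg hl0.le hv1,
             mul_le_mul_of_nonneg_left hv2 hl0.le, mul_le_mul_of_nonneg_left hu2 hl0.le])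
    rw [hmatch] at hxlo hxhi
    -- recurse with shifted chain
    have key := ih (fun n => (c (n+1) - c 1) / l) ((x - c 1)/l) ?_ ?_
    · exact key ⟨by rw [lt_div_iff₀ hl0]; linarith, by rw [div_lt_iff₀ hl0]; linarith⟩
    · constructor
      · simp
      · intro n
        dsimp only
        rcases hstep (n+1) with h | h
        · left; rw [h]
        · right; rw [h]; field_simp; ring
    · intro n
      obtain ⟨hbl, hbh⟩ := hb (n+1)
      have hdiv : ∀ u v : ℝ, u ≤ v → u / l ≤ v / l := fun u v h => by gcongr
      constructor
      · exact hdiv _ _ (by linarith)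
      · have h2 : (x - c 1) / l ≤ (c (n+1) - c 1 + l ^ (n+1)) / l := by
          apply hdiv; linarith
        calc (x - c 1) / l ≤ (c (n+1) - c 1 + l ^ (n+1)) / l := h2
          _ = (c (n+1) - c 1) / l + l ^ n := by rw [pow_succ]; field_simp

lemma mem_cantor_of_chain {l : ℝ} (h0 : 1/3 ≤ l) (h1 : l < 1/2) {c : ℕ → ℝ} {x : ℝ}
    (hc : IsChain' l c) (hb : ∀ n, c n ≤ x ∧ x ≤ c n + l ^ n) : x ∈ cantor l := by
  constructor
  · have h := hb 0
    rw [hc.1] at h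
    simp only [pow_zero] at h
    exact ⟨h.1.trans' (le_refl 0) |>.trans' (le_refl 0), by linarith [h.2]⟩
  · intro hmem
    simp only [mem_iUnion] at hmem
    obtain ⟨σ, hσ⟩ := hmem
    exact not_mem_gap h0 h1 σ c x hc hb hσ

lemma cantor_subset_Icc {l : ℝ} : cantor l ⊆ Icc 0 1 := fun x hx => hx.1

lemma mul_mem_cantor {l : ℝ} (h0 : 1/3 ≤ l) (h1 : l < 1/2) {x : ℝ}
    (hx : x ∈ cantor l) : l * x ∈ cantor l := by
  have hl0 : (0:ℝ) < l := by linarith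
  obtain ⟨⟨hx0, hx1⟩, hgap⟩ := hx
  constructor
  · exact ⟨mul_nonneg hl0.le hx0, by nlinarith⟩
  · intro hmem
    simp only [mem_iUnion] at hmem
    obtain ⟨σ, hσ⟩ := hmem
    match σ with
    | [] =>
      rw [wordMap_nil, wordMap_nil] at hσ
      obtain ⟨ha, hb⟩ := hσ
      nlinarith
    | (true :: σ') =>
      rw [wordMap_cons, wordMap_cons] at hσ
      obtain ⟨ha, hb⟩ := hσ
      simp only [if_true] at ha hb
      have := (wordMap_mem l hl0.le (by linarith) σ' ⟨hl0.le, by linarith⟩).1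
      nlinarith
    | (false :: σ') =>
      rw [wordMap_cons, wordMap_cons] at hσ
      obtain ⟨ha, hb⟩ := hσ
      simp only [if_false, Bool.false_eq_true, add_zero] at ha hb
      apply hgap
      simp only [mem_iUnion]
      exact ⟨σ', (mul_lt_mul_iff_right₀ hl0).mp ha, (mul_lt_mul_iff_right₀ hl0).mp hb⟩

lemma pow_mul_mem_cantor {l : ℝ} (h0 : 1/3 ≤ l) (h1 : l < 1/2) {x : ℝ}
    (hx : x ∈ cantor l) : ∀ k : ℕ, l ^ k * x ∈ cantor l := by
  intro k
  induction k with
  | zero => simpa using hx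
  | succ n ih =>
    have := mul_mem_cantor h0 h1 ih
    rw [← mul_assoc] at this
    rw [pow_succ, mul_comm (l^n) l]
    exact this


section Step
variable {l z a b g : ℝ}

set_option maxHeartbeats 1000000 in
lemma step_lemma (h0 : 1/3 ≤ l) (h1 : l < 1/2)
    (ha1 : 1 - l ≤ a) (ha2 : a + g ≤ 1) (hb1 : 1 - l ≤ b) (hb2 : b + g ≤ 1)
    (hg : 0 < g)
    (H1 : a^2 ≤ z*(b+g)) (H2 : z*b ≤ (a+g)^2) :
    ∃ a' b', (a' = a ∨ a' = a + g - l*g) ∧ (b' = b ∨ b' = b + g - l*g) ∧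
      a'^2 ≤ z*(b' + l*g) ∧ z*b' ≤ (a' + l*g)^2 := by
  have hl0 : (0:ℝ) < l := by linarith
  have hgl : g ≤ l := by linarith
  have hglg : 0 ≤ g - l*g := by nlinarith
  have hz : 0 < z := by nlinarith
  by_cases T1 : z*(b+g-l*g) ≤ (a+l*g)^2
  · refine ⟨a, b+g-l*g, Or.inl rfl, Or.inr rfl, ?_, T1⟩
    calc a^2 ≤ z*(b+g) := H1
      _ = z*(b+g-l*g+l*g) := by ring
  by_cases T2 : (a+g-l*g)^2 ≤ z*(b+l*g)
  · refine ⟨a+g-l*g, b, Or.inr rfl, Or.inl rfl, T2, ?_⟩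
    calc z*b ≤ (a+g)^2 := H2
      _ = (a+g-l*g+l*g)^2 := by ring
  push_neg at T1 T2
  -- K2 : (a+g)^2*(b+l*g) ≥ (a+g-l*g)^2*(b+g-l*g)
  have hA1 : a + g ≤ 1 := ha2
  have hA0 : (0:ℝ) ≤ a + g := by linarith
  have cube : (0:ℝ) ≤ -l^3-2*l^2+4*l-1 := by
    nlinarith [mul_nonneg (by linarith : (0:ℝ) ≤ 3*l-1) (by linarith : (0:ℝ) ≤ 1-2*l),
      mul_nonneg (mul_nonneg (by linarith : (0:ℝ) ≤ 3*l-1) (by linarith : (0:ℝ) ≤ 1-2*l))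
        (by linarith : (0:ℝ) ≤ l),
      mul_nonneg (mul_nonneg (by linarith : (0:ℝ) ≤ 3*l-1) (by linarith : (0:ℝ) ≤ 1-2*l))
        (by linarith : (0:ℝ) ≤ 1-l)]
  have bracket2 : (0:ℝ) ≤ l*(b+g-l*g)*(2*(a+g)-l*g) - (1-2*l)*(a+g)^2 := by
    have hB : (0:ℝ) ≤ b+g-l*g-(1-l) := by linarith
    have h2A : (0:ℝ) ≤ 2*(a+g)-l*g := by nlinarith
    have t1 : l*(b+g-l*g)*(2*(a+g)-l*g) ≥ l*(1-l)*(2*(a+g)-l*g) := by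
      nlinarith [mul_nonneg (mul_nonneg hl0.le hB) h2A]
    have q1 : (0:ℝ) ≤ -2*l^2+4*l-1 := by
      nlinarith [mul_nonneg hl0.le (by linarith : (0:ℝ) ≤ 1-2*l)]
    have q2 : (0:ℝ) ≤ -2*l^2+4*l-1 - l^2*g := by
      nlinarith [mul_nonneg (sq_nonneg l) (by linarith : (0:ℝ) ≤ l-g)]
    have t2 : (a+g)*(-2*l^2+4*l-1) ≥ l^2*(1-l)*g := by
      have u1 : (a+g)*(-2*l^2+4*l-1) ≥ (1-l)*(-2*l^2+4*l-1) := by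
        nlinarith [mul_nonneg (by linarith : (0:ℝ) ≤ (a+g)-(1-l)) q1]
      have u2 : (1-l)*(-2*l^2+4*l-1) ≥ l^2*(1-l)*g := by
        nlinarith [mul_nonneg (by linarith : (0:ℝ) ≤ 1-l) q2]
      linarith
    have t3 : (1-2*l)*(a+g) ≥ (1-2*l)*(a+g)^2 := by
      nlinarith [mul_nonneg (mul_nonneg (by linarith : (0:ℝ) ≤ 1-2*l) hA0)
        (by linarith : (0:ℝ) ≤ 1-(a+g))]
    nlinarith
  have K2 : (a+g-l*g)^2*(b+g-l*g) ≤ (a+g)^2*(b+l*g) := by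
    have id2 : (a+g)^2*(b+l*g) - (a+g-l*g)^2*(b+g-l*g)
        = g*(l*(b+g-l*g)*(2*(a+g)-l*g) - (1-2*l)*(a+g)^2) := by ring
    nlinarith [mul_nonneg hg.le bracket2]
  by_cases T3 : (a+g-l*g)^2 ≤ z*(b+g)
  · refine ⟨a+g-l*g, b+g-l*g, Or.inr rfl, Or.inr rfl, ?_, ?_⟩
    · calc (a+g-l*g)^2 ≤ z*(b+g) := T3
        _ = z*(b+g-l*g+l*g) := by ring
    · have hbl : (0:ℝ) < b + l*g := by nlinarith
      have s2 : z*(b+l*g)*(b+g-l*g) ≤ (a+g-l*g)^2*(b+g-l*g) :=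
        mul_le_mul_of_nonneg_right T2.le (by linarith)
      have s4 : z*(b+g-l*g)*(b+l*g) ≤ (a+g-l*g+l*g)^2*(b+l*g) := by nlinarith [K2]
      exact le_of_mul_le_mul_right s4 hbl
  push_neg at T3
  refine ⟨a, b, Or.inl rfl, Or.inl rfl, ?_, ?_⟩
  · -- a^2 ≤ z*(b+l*g) using ¬T1 and K4
    have bracket4 : (0:ℝ) ≤ 2*a*l*(b+l*g) + l^2*g*(b+l*g) - a^2*(1-2*l) := by
      have f0 : (0:ℝ) ≤ a := by linarith
      have f1 : (0:ℝ) ≤ 2*l*b - a*(1-2*l) := by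
        nlinarith [mul_nonneg hl0.le (by linarith : (0:ℝ) ≤ 1-2*l),
          mul_nonneg (by linarith : (0:ℝ) ≤ 1-a) (by linarith : (0:ℝ) ≤ 1-2*l),
          mul_nonneg hl0.le (by linarith : (0:ℝ) ≤ b-(1-l))]
      nlinarith [mul_nonneg f0 f1, mul_nonneg (mul_nonneg f0 hl0.le) (mul_nonneg hl0.le hg.le),
        mul_nonneg (mul_nonneg (sq_nonneg l) hg.le) (by nlinarith : (0:ℝ) ≤ b+l*g)]
    have K4 : a^2*(b+g-l*g) ≤ (a+l*g)^2*(b+l*g) := by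
      have id4 : (a+l*g)^2*(b+l*g) - a^2*(b+g-l*g)
          = g*(2*a*l*(b+l*g) + l^2*g*(b+l*g) - a^2*(1-2*l)) := by ring
      linarith [mul_nonneg hg.le bracket4, id4]
    have hbgl : (0:ℝ) < b + g - l*g := by nlinarith
    have s2 : (a+l*g)^2*(b+l*g) ≤ z*(b+g-l*g)*(b+l*g) :=
      mul_le_mul_of_nonneg_right T1.le (by nlinarith : (0:ℝ) ≤ b+l*g)
    have s4 : a^2*(b+g-l*g) ≤ z*(b+l*g)*(b+g-l*g) := by nlinarith [K4, s2]
    exact le_of_mul_le_mul_right s4 hbgl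
  · -- z*b ≤ (a+l*g)^2 using ¬T3 and K3
    have bracket3 : (0:ℝ) ≤ (a+l*g)^2 - (1-2*l)*b*(2*a+g) := by
      have f0 : (0:ℝ) ≤ a := by linarith
      have f2 : (0:ℝ) ≤ a - 2*(1-2*l) + l*g := by nlinarith [mul_nonneg hl0.le hg.le]
      have f3 : (0:ℝ) ≤ 2*a*l + l^2*g - (1-2*l) := by
        nlinarith [mul_nonneg hl0.le (by linarith : (0:ℝ) ≤ 1-2*l),
          mul_nonneg hl0.le (by linarith : (0:ℝ) ≤ a-(1-l)),
          mul_nonneg (sq_nonneg l) hg.le]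
      nlinarith [mul_nonneg f0 (by linarith : (0:ℝ) ≤ a - 2*(1-2*l)), mul_nonneg hg.le f3,
        mul_nonneg (mul_nonneg (by linarith : (0:ℝ) ≤ 1-2*l)
          (by linarith : (0:ℝ) ≤ 2*a+g)) (by linarith : (0:ℝ) ≤ 1-b)]
    have K3 : (a+g-l*g)^2*b ≤ (a+l*g)^2*(b+g) := by
      have id3 : (a+l*g)^2*(b+g) - (a+g-l*g)^2*b
          = g*((a+l*g)^2 - (1-2*l)*b*(2*a+g)) := by ring
      linarith [mul_nonneg hg.le bracket3, id3]
    have hbg : (0:ℝ) < b + g := by linarith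
    have s2 : z*(b+g)*b ≤ (a+g-l*g)^2*b := by
      nlinarith [mul_le_mul_of_nonneg_right T3.le (by linarith : (0:ℝ) ≤ b)]
    have s4 : z*b*(b+g) ≤ (a+l*g)^2*(b+g) := by nlinarith
    exact le_of_mul_le_mul_right s4 hbg

end Step


section Rec

def GoodP (l z : ℝ) (n : ℕ) (s : ℝ × ℝ) : Prop :=
  1 - l ≤ s.1 ∧ s.1 + l^(n+1) ≤ 1 ∧ 1 - l ≤ s.2 ∧ s.2 + l^(n+1) ≤ 1 ∧
  s.1^2 ≤ z*(s.2 + l^(n+1)) ∧ z*s.2 ≤ (s.1 + l^(n+1))^2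

variable {l z : ℝ}


lemma good_step (h0 : 1/3 ≤ l) (h1 : l < 1/2) (n : ℕ) (s : ℝ × ℝ)
    (hs : GoodP l z n s) :
    ∃ t : ℝ × ℝ, ((t.1 = s.1 ∨ t.1 = s.1 + l^(n+1) - l*l^(n+1)) ∧
      (t.2 = s.2 ∨ t.2 = s.2 + l^(n+1) - l*l^(n+1))) ∧ GoodP l z (n+1) t := by
  obtain ⟨ha1, ha2, hb1, hb2, H1, H2⟩ := hs
  have hl0 : (0:ℝ) < l := by linarith
  have hg : (0:ℝ) < l^(n+1) := pow_pos hl0 _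
  obtain ⟨a', b', hrela, hrelb, N1, N2⟩ := step_lemma h0 h1 ha1 ha2 hb1 hb2 hg H1 H2
  have hgl : l*l^(n+1) ≤ l^(n+1) := by nlinarith
  have hpow : l^(n+1+1) = l*l^(n+1) := by ring
  refine ⟨(a', b'), ⟨Or.imp id id hrela, Or.imp id id hrelb⟩, ?_, ?_, ?_, ?_, ?_, ?_⟩ <;>
    dsimp only
  · rcases hrela with h | h <;> rw [h] <;> linarith
  · rw [hpow]; rcases hrela with h | h <;> rw [h] <;> linarith
  · rcases hrelb with h | h <;> rw [h] <;> linarith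
  · rw [hpow]; rcases hrelb with h | h <;> rw [h] <;> linarith
  · rw [hpow]; exact N1
  · rw [hpow]; exact N2

lemma good_base (h1 : l < 1/2) (hz1 : (1-l)^2 ≤ z) (hz2 : z*(1-l) ≤ 1) :
    GoodP l z 0 (1-l, 1-l) := by
  refine ⟨le_refl _, ?_, le_refl _, ?_, ?_, ?_⟩ <;> dsimp only <;> rw [pow_one]
  · linarith
  · linarith
  · calc (1-l)^2 ≤ z := hz1
      _ = z * ((1-l) + l) := by ring
  · calc z*(1-l) ≤ 1 := hz2
      _ = ((1-l) + l)^2 := by ring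

noncomputable def seqF (h0 : 1/3 ≤ l) (h1 : l < 1/2) (hz1 : (1-l)^2 ≤ z) (hz2 : z*(1-l) ≤ 1) :
    (n : ℕ) → {s : ℝ × ℝ // GoodP l z n s}
  | 0 => ⟨(1-l, 1-l), good_base h1 hz1 hz2⟩
  | n+1 => ⟨(good_step h0 h1 n (seqF h0 h1 hz1 hz2 n).1 (seqF h0 h1 hz1 hz2 n).2).choose,
      (good_step h0 h1 n (seqF h0 h1 hz1 hz2 n).1 (seqF h0 h1 hz1 hz2 n).2).choose_spec.2⟩

lemma seqF_rel (h0 : 1/3 ≤ l) (h1 : l < 1/2) (hz1 : (1-l)^2 ≤ z) (hz2 : z*(1-l) ≤ 1) (n : ℕ) :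
    ((seqF h0 h1 hz1 hz2 (n+1)).1.1 = (seqF h0 h1 hz1 hz2 n).1.1 ∨
      (seqF h0 h1 hz1 hz2 (n+1)).1.1 = (seqF h0 h1 hz1 hz2 n).1.1 + l^(n+1) - l*l^(n+1)) ∧
    ((seqF h0 h1 hz1 hz2 (n+1)).1.2 = (seqF h0 h1 hz1 hz2 n).1.2 ∨
      (seqF h0 h1 hz1 hz2 (n+1)).1.2 = (seqF h0 h1 hz1 hz2 n).1.2 + l^(n+1) - l*l^(n+1)) :=
  (good_step h0 h1 n (seqF h0 h1 hz1 hz2 n).1 (seqF h0 h1 hz1 hz2 n).2).choose_spec.1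

end Rec

section Main
variable {l z : ℝ}


lemma sandwich {z x y a b g : ℝ} (hz : 0 < z) (hg : 0 < g) (hg1 : g ≤ 1)
    (ha0 : 0 ≤ a) (ha1 : a ≤ 1) (hax : a ≤ x) (hxa : x ≤ a + g)
    (hby : b ≤ y) (hyb : y ≤ b + g)
    (H1 : a^2 ≤ z*(b+g)) (H2 : z*b ≤ (a+g)^2) : |x^2 - z*y| ≤ (3+z)*g := by
  have hx0 : 0 ≤ x := le_trans ha0 hax
  have hsq1 : x^2 ≤ (a+g)^2 := by nlinarith
  have hsq2 : a^2 ≤ x^2 := by nlinarith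
  have hzy1 : z*b ≤ z*y := by nlinarith
  have hzy2 : z*y ≤ z*(b+g) := by nlinarith
  rw [abs_le]
  constructor <;> nlinarith

lemma main_exists (h0 : 1/3 ≤ l) (h1 : l < 1/2) (hz1 : (1-l)^2 ≤ z) (hz2 : z*(1-l) ≤ 1) :
    ∃ x ∈ cantor l, ∃ y ∈ cantor l, 1 - l ≤ y ∧ x^2 = z*y := by
  have hl0 : (0:ℝ) < l := by linarith
  have hz : (0:ℝ) < z := by nlinarith
  obtain ⟨A, B, hA0, hgood, hrelA, hrelB⟩ :
      ∃ A B : ℕ → ℝ, (A 0 = 1 - l ∧ B 0 = 1 - l) ∧ (∀ n, GoodP l z n (A n, B n)) ∧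
        (∀ n, A (n+1) = A n ∨ A (n+1) = A n + l^(n+1) - l*l^(n+1)) ∧
        (∀ n, B (n+1) = B n ∨ B (n+1) = B n + l^(n+1) - l*l^(n+1)) := by
    refine ⟨fun n => (seqF h0 h1 hz1 hz2 n).1.1, fun n => (seqF h0 h1 hz1 hz2 n).1.2,
      ⟨rfl, rfl⟩, fun n => ?_, fun n => (seqF_rel h0 h1 hz1 hz2 n).1,
      fun n => (seqF_rel h0 h1 hz1 hz2 n).2⟩
    have h := (seqF h0 h1 hz1 hz2 n).2
    simpa only [Prod.mk.eta] using h
  have hpos : ∀ n : ℕ, (0:ℝ) < l^(n+1) := fun n => pow_pos hl0 _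
  have hGa : ∀ n, 1 - l ≤ A n ∧ A n + l^(n+1) ≤ 1 := fun n => ⟨(hgood n).1, (hgood n).2.1⟩
  have hGb : ∀ n, 1 - l ≤ B n ∧ B n + l^(n+1) ≤ 1 := fun n => ⟨(hgood n).2.2.1, (hgood n).2.2.2.1⟩
  have hH1 : ∀ n, (A n)^2 ≤ z*(B n + l^(n+1)) := fun n => (hgood n).2.2.2.2.1
  have hH2 : ∀ n, z*(B n) ≤ (A n + l^(n+1))^2 := fun n => (hgood n).2.2.2.2.2
  have hstepA : ∀ n, A n ≤ A (n+1) ∧ A (n+1) + l^(n+1+1) ≤ A n + l^(n+1) := by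
    intro n
    have h2 : 0 ≤ l^(n+1) - l*l^(n+1) := by nlinarith [hpos n]
    have h3 : l^(n+1+1) = l*l^(n+1) := by ring
    rcases hrelA n with h | h <;> rw [h, h3] <;> exact ⟨by linarith [hpos n], by linarith⟩
  have hstepB : ∀ n, B n ≤ B (n+1) ∧ B (n+1) + l^(n+1+1) ≤ B n + l^(n+1) := by
    intro n
    have h2 : 0 ≤ l^(n+1) - l*l^(n+1) := by nlinarith [hpos n]
    have h3 : l^(n+1+1) = l*l^(n+1) := by ring
    rcases hrelB n with h | h <;> rw [h, h3] <;> exact ⟨by linarith [hpos n], by linarith⟩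
  have hnest : ∀ (C : ℕ → ℝ), (∀ n, C n ≤ C (n+1) ∧ C (n+1) + l^(n+1+1) ≤ C n + l^(n+1)) →
      ∀ n m, n ≤ m → C n ≤ C m ∧ C m + l^(m+1) ≤ C n + l^(n+1) := by
    intro C hC n m hnm
    induction m, hnm using Nat.le_induction with
    | base => exact ⟨le_refl _, le_refl _⟩
    | succ m hm ih =>
      obtain ⟨s1, s2⟩ := hC m
      exact ⟨le_trans ih.1 s1, le_trans s2 ih.2⟩
  have hnestA := hnest A hstepA
  have hnestB := hnest B hstepB
  have hub : ∀ (C : ℕ → ℝ), (∀ n, 1 - l ≤ C n ∧ C n + l^(n+1) ≤ 1) → ∀ n, C n ≤ 1 := by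
    intro C hC n; have := (hC n).2; have := hpos n; linarith
  -- define limits
  have hbddA : BddAbove (Set.range A) := ⟨1, by rintro _ ⟨n, rfl⟩; exact hub A hGa n⟩
  have hbddB : BddAbove (Set.range B) := ⟨1, by rintro _ ⟨n, rfl⟩; exact hub B hGb n⟩
  set x := ⨆ n, A n with hx
  set y := ⨆ n, B n with hy
  have hAx : ∀ n, A n ≤ x := fun n => le_ciSup hbddA n
  have hBy : ∀ n, B n ≤ y := fun n => le_ciSup hbddB n
  have hxA : ∀ n, x ≤ A n + l^(n+1) := by
    intro n
    apply ciSup_le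
    intro m
    rcases le_total m n with hmn | hnm
    · have := (hnestA m n hmn).1; linarith [hpos n]
    · have := (hnestA n m hnm).2; linarith [hpos m]
  have hyB : ∀ n, y ≤ B n + l^(n+1) := by
    intro n
    apply ciSup_le
    intro m
    rcases le_total m n with hmn | hnm
    · have := (hnestB m n hmn).1; linarith [hpos n]
    · have := (hnestB n m hnm).2; linarith [hpos m]
  -- chains
  have hchain : ∀ (C : ℕ → ℝ), C 0 = 1 - l →
      (∀ n, C (n+1) = C n ∨ C (n+1) = C n + l^(n+1) - l*l^(n+1)) →
      IsChain' l (fun k => Nat.rec 0 (fun m _ => C m) k) := by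
    intro C hC0 hrel
    constructor
    · rfl
    · intro n
      match n with
      | 0 => right; simp [hC0]
      | (m+1) =>
        rcases hrel m with h | h
        · left; exact h
        · right; show C (m+1) = C m + l^(m+1)*(1-l); rw [h]; ring
  have hbnd : ∀ (C : ℕ → ℝ) (w : ℝ), (∀ n, 1 - l ≤ C n ∧ C n + l^(n+1) ≤ 1) →
      (∀ n, C n ≤ w) → (∀ n, w ≤ C n + l^(n+1)) →
      (∀ k, (fun k => Nat.rec (0:ℝ) (fun m _ => C m) k) k ≤ w ∧
        w ≤ (fun k => Nat.rec (0:ℝ) (fun m _ => C m) k) k + l^k) := by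
    intro C w hG hCw hwC k
    match k with
    | 0 =>
      constructor
      · have := hCw 0; have := (hG 0).1; simp only [pow_zero]; dsimp; linarith
      · have := hwC 0; have := (hG 0).2; have := hpos 0; dsimp; simp only [pow_zero]; linarith
    | (m+1) => exact ⟨hCw m, hwC m⟩
  have hxmem : x ∈ cantor l :=
    mem_cantor_of_chain h0 h1 (hchain A hA0.1 hrelA) (hbnd A x hGa hAx hxA)
  have hymem : y ∈ cantor l :=
    mem_cantor_of_chain h0 h1 (hchain B hA0.2 hrelB) (hbnd B y hGb hBy hyB)
  refine ⟨x, hxmem, y, hymem, le_trans (hGb 0).1 (hBy 0), ?_⟩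
  -- x^2 = z*y via squeeze
  have hxpos : 0 ≤ x := le_trans (by linarith) (le_trans (hGa 0).1 (hAx 0))
  have key : ∀ n : ℕ, |x^2 - z*y| ≤ (3+z) * l^(n+1) := by
    intro n
    have g0 := hpos n
    have g1 : l^(n+1) ≤ 1 := by
      have := (hGa n).1; have := (hGa n).2; linarith
    have hA1 : A n ≤ 1 := hub A hGa n
    have hxu : x ≤ A n + l^(n+1) := hxA n
    have hxl : A n ≤ x := hAx n
    have hyu : y ≤ B n + l^(n+1) := hyB n
    have hyl : B n ≤ y := hBy n
    have hAnn : 0 ≤ A n := by have := (hGa n).1; linarith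
    exact sandwich hz g0 g1 hAnn hA1 (hAx n) (hxA n) (hBy n) (hyB n) (hH1 n) (hH2 n)
  by_contra hne
  have hd : 0 < |x^2 - z*y| := abs_pos.2 (sub_ne_zero.2 hne)
  obtain ⟨n, hn⟩ := exists_pow_lt_of_lt_one (div_pos hd (by linarith : (0:ℝ) < 3+z)) (by linarith : l < 1)
  have := key n
  have hstep : l^(n+1) ≤ l^n := by
    calc l^(n+1) = l^n * l := by ring
      _ ≤ l^n * 1 := by nlinarith [pow_pos hl0 n]
      _ = l^n := by ring
  have : |x^2 - z*y| ≤ (3+z)*l^n := le_trans this (by nlinarith [pow_pos hl0 n])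
  rw [lt_div_iff₀ (by linarith : (0:ℝ) < 3+z)] at hn
  linarith

end Main


lemma window {l : ℝ} (h0 : 1/3 ≤ l) (h1 : l < 1/2) {w : ℝ} (hw : 0 < w) :
    ∃ m : ℤ, l^m * (1-l)^2 ≤ w ∧ w ≤ l^m / (1-l) := by
  have hl0 : (0:ℝ) < l := by linarith
  have h1l : (0:ℝ) < 1 - l := by linarith
  have hcube : (1-l)^3 ≤ l := by
    nlinarith [mul_nonneg (by linarith : (0:ℝ) ≤ l - 1/3) (sq_nonneg (l - 4/3))]
  obtain ⟨n, hn1, hn2⟩ := exists_mem_Ico_zpow (x := w/(1-l)^2) (y := 1/l)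
    (div_pos hw (by positivity)) (one_lt_one_div hl0 (by linarith))
  have e : ∀ k : ℤ, (1/l : ℝ)^k = l^(-k) := fun k => by
    rw [one_div, inv_zpow, ← zpow_neg]
  rw [e] at hn1 hn2
  refine ⟨-n, ?_, ?_⟩
  · calc l^(-n) * (1-l)^2 ≤ (w/(1-l)^2) * (1-l)^2 :=
        mul_le_mul_of_nonneg_right hn1 (by positivity)
      _ = w := by field_simp
  · have h3 : w < l^(-(n+1)) * (1-l)^2 := by
      rw [div_lt_iff₀ (by positivity)] at hn2
      exact hn2
    have h4 : l^(-(n+1)) * l = l^(-n) := by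
      rw [← zpow_add_one₀ (ne_of_gt hl0)]
      norm_num
    have hpz : (0:ℝ) < l^(-(n+1)) := zpow_pos hl0 _
    rw [le_div_iff₀ h1l]
    calc w * (1-l) ≤ (l^(-(n+1)) * (1-l)^2) * (1-l) :=
        mul_le_mul_of_nonneg_right h3.le h1l.le
      _ = l^(-(n+1)) * (1-l)^3 := by ring
      _ ≤ l^(-(n+1)) * l := by nlinarith
      _ = l^(-n) := h4

theorem stmt9 (l : ℝ) (h0 : 1 / 3 ≤ l) (h1 : l < 1 / 2) :
    {z : ℝ | ∃ x₁ ∈ cantor l, ∃ x₂ ∈ cantor l, x₂ ≠ 0 ∧ z = x₁ ^ 2 / x₂} ∪ {0} =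
      {0} ∪ ⋃ i : ℤ, Icc (l ^ i * (1 - l) ^ 2) (l ^ i / (1 - l)) := by
  have hl0 : (0:ℝ) < l := by linarith
  have h1l : (0:ℝ) < 1 - l := by linarith
  ext w
  simp only [mem_union, mem_setOf_eq, mem_singleton_iff, mem_iUnion, mem_Icc]
  constructor
  · rintro (⟨x₁, hx₁, x₂, hx₂, hne, rfl⟩ | rfl)
    · by_cases hx10 : x₁ = 0
      · left; rw [hx10]; simp
      · right
        have hx1pos : 0 < x₁ := lt_of_le_of_ne hx₁.1.1 (Ne.symm hx10)
        have hx2pos : 0 < x₂ := lt_of_le_of_ne hx₂.1.1 (Ne.symm hne)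
        have hwpos : 0 < x₁^2/x₂ := by positivity
        exact window h0 h1 hwpos
    · left; rfl
  · rintro (rfl | ⟨i, hi1, hi2⟩)
    · right; rfl
    · left
      have hipos : (0:ℝ) < l^i := zpow_pos hl0 i
      have hwpos : 0 < w := lt_of_lt_of_le (by positivity) hi1
      have hz1 : (1-l)^2 ≤ w / l^i := by
        rw [le_div_iff₀ hipos]; linarith [hi1]
      have hz2 : (w / l^i)*(1-l) ≤ 1 := by
        rw [div_mul_eq_mul_div, div_le_one hipos]
        exact (le_div_iff₀ h1l).mp hi2
      obtain ⟨x, hx, y, hy, hy1, hxy⟩ := main_exists h0 h1 hz1 hz2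
      have hypos : 0 < y := by linarith
      rcases le_or_gt 0 i with hi | hi
      · obtain ⟨n, rfl⟩ := Int.eq_ofNat_of_zero_le hi
        refine ⟨l^n * x, pow_mul_mem_cantor h0 h1 hx n, l^n * y,
          pow_mul_mem_cantor h0 h1 hy n, (mul_pos (pow_pos hl0 n) hypos).ne', ?_⟩
        have hln : (l:ℝ)^(n:ℤ) = l^n := zpow_natCast l n
        have hpn : (0:ℝ) < l^n := pow_pos hl0 n
        rw [hln] at hxy
        have e1 : (l^n*x)^2/(l^n*y) = l^n * (x^2/y) := by
          field_simp
        have e2 : x^2/y = w/l^n := by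
          rw [hxy, mul_div_assoc, div_self hypos.ne', mul_one]
        rw [e1, e2, mul_div_cancel₀ _ hpn.ne']
      · obtain ⟨n, hn⟩ : ∃ n : ℕ, (n:ℤ) = -i := ⟨(-i).toNat, Int.toNat_of_nonneg (by linarith)⟩
        refine ⟨x, hx, l^n * y, pow_mul_mem_cantor h0 h1 hy n,
          (mul_pos (pow_pos hl0 n) hypos).ne', ?_⟩
        have hln : (l:ℝ)^(n:ℤ) = l^n := zpow_natCast l n
        have hli : (l:ℝ)^n * l^i = 1 := by
          rw [← hln, ← zpow_add₀ (ne_of_gt hl0), hn]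
          simp
        have hpn : (0:ℝ) < l^n := pow_pos hl0 n
        have hww : w / l^i = w * l^n := by
          rw [div_eq_iff (ne_of_gt hipos), mul_assoc, hli, mul_one]
        rw [hxy, hww, mul_assoc, mul_div_cancel_right₀ _ (by positivity : (l:ℝ)^n * y ≠ 0)]
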